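/- Let S ⊂ ℝⁿ be a nonempty closed set and let x ∉ S be a point where d_S is not differentiable. Then D*d_S(x) = {(x−y)/|x−y| : y ∈ π_S(x)} and D⁺d_S(x) = conv(D*d_S(x)) = (x − conv(π_S(x)))/d_S(x). -/

import Mathlib

open scoped InnerProductSpace
open Metric Set Filter

noncomputable section

abbrev En (n : ℕ) := EuclideanSpace ℝ (Fin n)

variable {n : ℕ}

/-- Distance from the boundary of `Ω`. -/
noncomputable def dBd (Ω : Set (En n)) (x : En n) : ℝ := Metric.infDist x (frontier Ω)

/-- The inradius `ρ_Ω := max_{closure Ω} d_∂Ω`. -/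
noncomputable def rhoΩ (Ω : Set (En n)) : ℝ := sSup (dBd Ω '' closure Ω)

/-- The singular set `Σ(Ω)`: points of `Ω` where `d_∂Ω` is not differentiable. -/
def SingSet (Ω : Set (En n)) : Set (En n) := {x ∈ Ω | ¬ DifferentiableAt ℝ (dBd Ω) x}

/-- The cut locus: the closure of the singular set. -/
def cutLocus (Ω : Set (En n)) : Set (En n) := closure (SingSet Ω)

/-- The high ridge: points of `closure Ω` where `d_∂Ω` attains its maximum `ρ_Ω`. -/
def highRidge (Ω : Set (En n)) : Set (En n) := {x ∈ closure Ω | dBd Ω x = rhoΩ Ω}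

noncomputable def c₀ : ℝ := 3 ^ ((4 : ℝ) / 3) / 4

/-- The candidate web solution `φ_Ω`. -/
noncomputable def phiΩ (Ω : Set (En n)) (x : En n) : ℝ :=
  c₀ * (rhoΩ Ω ^ ((4 : ℝ) / 3) - (rhoΩ Ω - dBd Ω x) ^ ((4 : ℝ) / 3))

/-- The infinity Laplacian `⟨D²φ(x)∇φ(x), ∇φ(x)⟩` of a smooth function. -/
noncomputable def infLap (φ : En n → ℝ) (x : En n) : ℝ :=
  ⟪(fderiv ℝ (gradient φ) x) (gradient φ x), gradient φ x⟫_ℝ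

/-- Viscosity subsolution of `-Δ_∞ u = 1` on an open set `A`. -/
def IsViscSubsol (A : Set (En n)) (u : En n → ℝ) : Prop :=
  ∀ φ : En n → ℝ, ContDiffOn ℝ 2 φ A → ∀ x₀ ∈ A,
    IsLocalMin (φ - u) x₀ → -infLap φ x₀ ≤ 1

/-- Viscosity supersolution of `-Δ_∞ u = 1` on an open set `A`. -/
def IsViscSupersol (A : Set (En n)) (u : En n → ℝ) : Prop :=
  ∀ φ : En n → ℝ, ContDiffOn ℝ 2 φ A → ∀ x₀ ∈ A,
    IsLocalMax (φ - u) x₀ → 1 ≤ -infLap φ x₀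

/-- Viscosity solution of `-Δ_∞ u = 1` on an open set `A`. -/
def IsViscSol (A : Set (En n)) (u : En n → ℝ) : Prop :=
  ContinuousOn u A ∧ IsViscSubsol A u ∧ IsViscSupersol A u

/-- Viscosity solution of the Dirichlet problem `-Δ_∞ u = 1` in `Ω`, `u = 0` on `∂Ω`. -/
def IsDirichletSol (Ω : Set (En n)) (u : En n → ℝ) : Prop :=
  ContinuousOn u (closure Ω) ∧ (∀ x ∈ frontier Ω, u x = 0) ∧ IsViscSol Ω u

/-- `u` is a web function on `Ω`: it depends only on the distance from the boundary. -/
def IsWebOn (Ω : Set (En n)) (u : En n → ℝ) : Prop :=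
  ∃ f : ℝ → ℝ, ContinuousOn f (Set.Icc 0 (rhoΩ Ω)) ∧ ∀ x ∈ closure Ω, u x = f (dBd Ω x)

/-- Fréchet superdifferential of `u` at `x`. -/
def superDiff (u : En n → ℝ) (x : En n) : Set (En n) :=
  {p | ∀ ε > 0, ∀ᶠ y in nhds x, u y - u x - ⟪p, y - x⟫_ℝ ≤ ε * ‖y - x‖}

/-- Set of reachable gradients `D*u(x)`. -/
def reachGrad (u : En n → ℝ) (x : En n) : Set (En n) :=
  {p | ∃ xs : ℕ → En n, (∀ h, xs h ≠ x) ∧ (∀ h, DifferentiableAt ℝ u (xs h)) ∧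
    Filter.Tendsto xs Filter.atTop (nhds x) ∧
    Filter.Tendsto (fun h => gradient u (xs h)) Filter.atTop (nhds p)}

/-- The set of projections of `x` onto a closed set `S`. -/
def projSet (S : Set (En n)) (x : En n) : Set (En n) :=
  {y ∈ S | dist x y = Metric.infDist x S}

end

/-!
Write `d = d_S` and `n_y = (x - y) / |x - y|` for `y ∈ π_S(x)`. Since `d ≤ |· - y|` with
equality at `x`, every `n_y` is a supergradient of `d` at `x`. Conversely, if `y_t ∈ π_S(x + t v)`
then `d(x + t v) ≥ d(x) + t ⟪n_{y_t}, v⟫`, and as `t → 0⁺` the `y_t` accumulate on `π_S(x)`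
(upper semicontinuity of `π_S`); so every supergradient `p` has `⟪p, v⟫ ≥ min_{π_S(x)} ⟪n_y, v⟫`
for all `v`, and Hahn–Banach puts `p` in the compact convex hull of the `n_y`.

On the open segment from `x` to `y ∈ π_S(x)` the projection is unique, so `d` is differentiable
there with gradient `n_y`. Conversely, at a point of differentiability the gradient is the only
supergradient, hence equals `n_y` for every projection `y`, and limits of projections are
projections.
-/

open Topology

section GeneralFacts

variable {E : Type*} [NormedAddCommGroup E]

theorem IsCompact.convexHull [NormedSpace ℝ E] [FiniteDimensional ℝ E] {s : Set E}
    (hs : IsCompact s) : IsCompact (convexHull ℝ s) := by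
  rcases s.eq_empty_or_nonempty with rfl | ⟨y₀, hy₀⟩
  · simp
  set m := Module.finrank ℝ E + 1
  let comb : (Fin m → ℝ) × (Fin m → E) → E := fun q => ∑ i, q.1 i • q.2 i
  suffices _root_.convexHull ℝ s = comb '' (stdSimplex ℝ (Fin m) ×ˢ univ.pi fun _ => s) by
    rw [this]
    exact ((isCompact_stdSimplex ℝ (Fin m)).prod (isCompact_univ_pi fun _ => hs)).image
      (by fun_prop)
  refine Subset.antisymm (fun x hx => ?_) ?_
  · -- Carathéodory: `x` is a convex combination of at most `m` points of `s`; pad with zeros.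
    obtain ⟨ι, _, z, w, hzs, hz, hw0, hw1, hwx⟩ := eq_pos_convex_span_of_mem_convexHull hx
    obtain ⟨e⟩ : Nonempty (ι ↪ Fin m) := Function.Embedding.nonempty_of_card_le <| by
      rw [Fintype.card_fin]
      exact hz.card_le_finrank_succ.trans (Nat.succ_le_succ (Submodule.finrank_le _))
    refine ⟨(Function.extend e w 0, Function.extend e z fun _ => y₀),
      ⟨⟨fun j => ?_, ?_⟩, fun j _ => ?_⟩, ?_⟩
    · dsimp only
      by_cases hj : ∃ i, e i = j
      · obtain ⟨i, rfl⟩ := hj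
        rw [e.injective.extend_apply]
        exact (hw0 i).le
      · rw [Function.extend_apply' _ _ _ hj]
        rfl
    · rw [← hw1]
      exact (Fintype.sum_of_injective e e.injective w _
        (fun j hj => Function.extend_apply' (f := e) w 0 j hj)
        fun i => (e.injective.extend_apply w (0 : Fin m → ℝ) i).symm).symm
    · dsimp only
      by_cases hj : ∃ i, e i = j
      · obtain ⟨i, rfl⟩ := hj
        rw [e.injective.extend_apply]
        exact hzs (mem_range_self i)
      · rw [Function.extend_apply' _ _ _ hj]
        exact hy₀
    · rw [← hwx]
      refine (Fintype.sum_of_injective e e.injective (fun i => w i • z i) _ (fun j hj => ?_)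
        fun i => ?_).symm
      · simp [Function.extend_apply' _ _ _ hj]
      · simp [e.injective.extend_apply]
  · rintro _ ⟨⟨w, z⟩, ⟨hw, hz⟩, rfl⟩
    exact (convex_convexHull ℝ s).sum_mem (fun i _ => hw.1 i) hw.2
      fun i _ => subset_convexHull ℝ s (hz i (mem_univ i))

theorem tendsto_add_smul_nhdsGT_zero [NormedSpace ℝ E] (x v : E) :
    Tendsto (fun t : ℝ => x + t • v) (𝓝[>] 0) (𝓝 x) := by
  have : Tendsto (fun t : ℝ => x + t • v) (𝓝 0) (𝓝 (x + (0 : ℝ) • v)) :=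
    (continuous_const.add (continuous_id.smul continuous_const)).tendsto 0
  simpa using this.mono_left nhdsWithin_le_nhds

theorem continuousOn_inv_norm_sub_smul_sub [NormedSpace ℝ E] (x : E) :
    ContinuousOn (fun y => ‖x - y‖⁻¹ • (x - y)) {x}ᶜ := fun _ hy =>
  (((continuous_const.sub continuous_id).norm.continuousAt.inv₀
    (norm_ne_zero_iff.2 (sub_ne_zero.2 (Ne.symm hy)))).smul
      (continuous_const.sub continuous_id).continuousAt).continuousWithinAt

theorem norm_add_le_norm_add_inner_add [InnerProductSpace ℝ E] {a : E} (ha : a ≠ 0) (h : E) :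
    ‖a + h‖ ≤ ‖a‖ + ⟪‖a‖⁻¹ • a, h⟫_ℝ + ‖h‖ ^ 2 / (2 * ‖a‖) := by
  have hpos : 0 < ‖a‖ := norm_pos_iff.2 ha
  have hsq := norm_add_sq_real a h
  rw [real_inner_smul_left, ← sub_nonneg]
  have key : ‖a‖ + ‖a‖⁻¹ * ⟪a, h⟫_ℝ + ‖h‖ ^ 2 / (2 * ‖a‖) - ‖a + h‖
      = (‖a + h‖ - ‖a‖) ^ 2 / (2 * ‖a‖) := by
    field_simp
    linear_combination (-1) * hsq
  rw [key]
  positivity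

end GeneralFacts

section Projections

variable {n : ℕ} {S : Set (En n)} {x y z : En n}

theorem projSet_nonempty (hS : S.Nonempty) (hSc : IsClosed S) (z : En n) :
    (projSet S z).Nonempty := by
  obtain ⟨y, hy, hd⟩ := hSc.exists_infDist_eq_dist hS z
  exact ⟨y, hy, hd.symm⟩

theorem norm_sub_eq_infDist_of_mem_projSet (hy : y ∈ projSet S z) :
    ‖z - y‖ = infDist z S := by
  rw [← dist_eq_norm]
  exact hy.2

theorem isCompact_projSet (hSc : IsClosed S) (z : En n) : IsCompact (projSet S z) := by
  refine (isCompact_closedBall z (infDist z S)).of_isClosed_subset ?_ fun y hy => ?_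
  · exact hSc.inter (isClosed_eq (continuous_const.dist continuous_id) continuous_const)
  · rw [mem_closedBall, dist_comm]
    exact hy.2.le

theorem mem_projSet_of_tendsto {ι : Type*} {l : Filter ι} [l.NeBot] (hSc : IsClosed S)
    {zs ys : ι → En n} (hz : Tendsto zs l (𝓝 z)) (hy : Tendsto ys l (𝓝 y))
    (hmem : ∀ᶠ k in l, ys k ∈ projSet S (zs k)) : y ∈ projSet S z := by
  have hgraph : IsClosed {q : En n × En n | q.2 ∈ S ∧ dist q.1 q.2 = infDist q.1 S} :=
    (hSc.preimage continuous_snd).inter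
      (isClosed_eq (continuous_fst.dist continuous_snd)
        ((continuous_infDist_pt S).comp continuous_fst))
  exact hgraph.mem_of_tendsto (hz.prodMk_nhds hy) hmem

theorem exists_pos_forall_mem_of_projSet_subset (hSc : IsClosed S) (z : En n) {U : Set (En n)}
    (hU : IsOpen U) (hPU : projSet S z ⊆ U) :
    ∃ δ > 0, ∀ w ∈ S, dist z w < infDist z S + δ → w ∈ U := by
  set C := (S ∩ closedBall z (infDist z S + 1)) \ U
  have hC : IsCompact C := ((isCompact_closedBall z _).inter_left hSc).diff hU
  have hmemC : ∀ w ∈ S, dist z w ≤ infDist z S + 1 → w ∉ U → w ∈ C := fun w hw hzw hwU =>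
    ⟨⟨hw, by rwa [mem_closedBall, dist_comm]⟩, hwU⟩
  rcases C.eq_empty_or_nonempty with hC0 | hCne
  · refine ⟨1, one_pos, fun w hw hzw => by_contra fun hwU => ?_⟩
    simpa [hC0] using hmemC w hw hzw.le hwU
  -- The nearest point of `C` to `z` is strictly farther than `infDist z S`; that gap is `δ`.
  obtain ⟨w₀, hw₀, hmin⟩ :=
    hC.exists_isMinOn hCne (continuous_const.dist continuous_id).continuousOn
  have hgap : infDist z S < dist z w₀ :=
    (infDist_le_dist_of_mem hw₀.1.1).lt_of_ne fun h => hw₀.2 (hPU ⟨hw₀.1.1, h.symm⟩)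
  refine ⟨min 1 (dist z w₀ - infDist z S), lt_min one_pos (sub_pos.2 hgap),
    fun w hw hzw => by_contra fun hwU => ?_⟩
  have h1 := min_le_left 1 (dist z w₀ - infDist z S)
  have h2 := min_le_right 1 (dist z w₀ - infDist z S)
  have h3 : dist z w₀ ≤ dist z w := hmin (hmemC w hw (by linarith) hwU)
  linarith

theorem eventually_projSet_subset (hSc : IsClosed S) (z : En n) {U : Set (En n)}
    (hU : IsOpen U) (hPU : projSet S z ⊆ U) : ∀ᶠ z' in 𝓝 z, projSet S z' ⊆ U := by
  obtain ⟨δ, hδ, hmem⟩ := exists_pos_forall_mem_of_projSet_subset hSc z hU hPU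
  filter_upwards [ball_mem_nhds z (half_pos hδ)] with z' hz' w hw
  refine hmem w hw.1 ?_
  have h1 : dist z w ≤ dist z z' + dist z' w := dist_triangle _ _ _
  have h2 : infDist z' S ≤ infDist z S + dist z' z := infDist_le_infDist_add_dist
  rw [mem_ball] at hz'
  rw [hw.2, dist_comm z z'] at h1
  linarith

end Projections

section Superdifferential

variable {n : ℕ} {u : En n → ℝ} {x p : En n}

theorem convex_superDiff : Convex ℝ (superDiff u x) := by
  intro p hp q hq a b ha hb hab ε hε
  filter_upwards [hp ε hε, hq ε hε] with y hpy hqy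
  have hsplit : u y - u x - ⟪a • p + b • q, y - x⟫_ℝ
      = a * (u y - u x - ⟪p, y - x⟫_ℝ) + b * (u y - u x - ⟪q, y - x⟫_ℝ) := by
    rw [inner_add_left, real_inner_smul_left, real_inner_smul_left]
    linear_combination (u y - u x) * hab.symm
  rw [hsplit]
  calc a * (u y - u x - ⟪p, y - x⟫_ℝ) + b * (u y - u x - ⟪q, y - x⟫_ℝ)
      ≤ a * (ε * ‖y - x‖) + b * (ε * ‖y - x‖) := by gcongr
    _ = ε * ‖y - x‖ := by linear_combination (ε * ‖y - x‖) * hab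

theorem eventually_slope_le_of_mem_superDiff (hp : p ∈ superDiff u x) (v : En n) {ε : ℝ}
    (hε : 0 < ε) : ∀ᶠ t in 𝓝[>] (0 : ℝ), t⁻¹ * (u (x + t • v) - u x) ≤ ⟪p, v⟫_ℝ + ε := by
  have hε' : 0 < ε / (‖v‖ + 1) := by positivity
  have hεv : ε / (‖v‖ + 1) * ‖v‖ ≤ ε := by
    rw [div_mul_eq_mul_div, div_le_iff₀ (by positivity)]
    nlinarith [norm_nonneg v]
  filter_upwards [(tendsto_add_smul_nhdsGT_zero x v).eventually (hp _ hε'), self_mem_nhdsWithin]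
    with t ht (htpos : 0 < t)
  rw [add_sub_cancel_left, real_inner_smul_right, norm_smul, Real.norm_of_nonneg htpos.le] at ht
  rw [inv_mul_le_iff₀ htpos]
  nlinarith

theorem eq_of_hasGradientAt_of_mem_superDiff {g : En n} (hg : HasGradientAt u g x)
    (hp : p ∈ superDiff u x) : p = g := by
  have hle : ∀ v, ⟪g, v⟫_ℝ ≤ ⟪p, v⟫_ℝ := by
    intro v
    have hline : HasDerivAt (fun t : ℝ => x + t • v) v 0 := by
      simpa using ((hasDerivAt_id (0 : ℝ)).smul_const v).const_add x
    have hd : HasDerivAt (fun t : ℝ => u (x + t • v)) ⟪g, v⟫_ℝ 0 := by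
      have hfd : HasFDerivAt u (InnerProductSpace.toDual ℝ (En n) g) (x + (0 : ℝ) • v) := by
        simpa using hasGradientAt_iff_hasFDerivAt.mp hg
      have := hfd.comp_hasDerivAt 0 hline
      rwa [InnerProductSpace.toDual_apply_apply] at this
    refine le_of_forall_pos_le_add fun ε hε => le_of_tendsto hd.tendsto_slope_zero_right ?_
    filter_upwards [eventually_slope_le_of_mem_superDiff hp v hε] with t ht
    simpa using ht
  have hself : ⟪g - p, g - p⟫_ℝ ≤ 0 := by
    rw [inner_sub_left]
    linarith [hle (g - p)]
  exact (sub_eq_zero.1 (real_inner_self_nonpos.1 hself)).symm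

end Superdifferential

section DistanceFunction

variable {n : ℕ} {S : Set (En n)} {x y z : En n}

theorem infDist_add_inner_le_infDist_add {h : En n} (hy : y ∈ projSet S (z + h))
    (hzy : z ≠ y) :
    infDist z S + ⟪‖z - y‖⁻¹ • (z - y), h⟫_ℝ ≤ infDist (z + h) S := by
  have hpos : 0 < ‖z - y‖ := norm_pos_iff.2 (sub_ne_zero.2 hzy)
  calc infDist z S + ⟪‖z - y‖⁻¹ • (z - y), h⟫_ℝ
      ≤ ‖z - y‖ + ⟪‖z - y‖⁻¹ • (z - y), h⟫_ℝ := by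
        gcongr
        rw [← dist_eq_norm]
        exact infDist_le_dist_of_mem hy.1
    _ = ⟪‖z - y‖⁻¹ • (z - y), (z - y) + h⟫_ℝ := by
        rw [inner_add_right, real_inner_smul_left, real_inner_smul_left,
          real_inner_self_eq_norm_sq]
        field_simp
    _ ≤ ‖‖z - y‖⁻¹ • (z - y)‖ * ‖(z - y) + h‖ := real_inner_le_norm _ _
    _ = ‖(z - y) + h‖ := by
        rw [norm_smul, norm_inv, norm_norm, inv_mul_cancel₀ hpos.ne', one_mul]
    _ = infDist (z + h) S := by
        rw [← hy.2, dist_eq_norm]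
        congr 1
        abel

theorem inv_norm_sub_smul_sub_mem_superDiff_infDist (hx : x ∉ S) (hy : y ∈ projSet S x) :
    ‖x - y‖⁻¹ • (x - y) ∈ superDiff (fun z => infDist z S) x := by
  intro ε hε
  have ha : x - y ≠ 0 := sub_ne_zero.2 (ne_of_mem_of_not_mem hy.1 hx).symm
  have hpos : 0 < ‖x - y‖ := norm_pos_iff.2 ha
  filter_upwards [ball_mem_nhds x (show 0 < 2 * ‖x - y‖ * ε by positivity)] with z hz
  rw [mem_ball, dist_eq_norm] at hz
  have hup : infDist z S ≤ ‖(x - y) + (z - x)‖ := by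
    rw [show (x - y) + (z - x) = z - y by abel, ← dist_eq_norm]
    exact infDist_le_dist_of_mem hy.1
  have hquad : ‖z - x‖ ^ 2 / (2 * ‖x - y‖) ≤ ε * ‖z - x‖ := by
    rw [div_le_iff₀ (by positivity)]
    nlinarith [norm_nonneg (z - x)]
  linarith [norm_add_le_norm_add_inner_add ha (z - x), norm_sub_eq_infDist_of_mem_projSet hy]

theorem gradient_infDist_eq (hz : z ∉ S) (hd : DifferentiableAt ℝ (fun w => infDist w S) z)
    (hy : y ∈ projSet S z) : gradient (fun w => infDist w S) z = ‖z - y‖⁻¹ • (z - y) :=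
  (eq_of_hasGradientAt_of_mem_superDiff hd.hasGradientAt
    (inv_norm_sub_smul_sub_mem_superDiff_infDist hz hy)).symm

theorem exists_mem_projSet_inner_le_of_mem_superDiff (hS : S.Nonempty) (hSc : IsClosed S)
    (hx : x ∉ S) {p : En n} (hp : p ∈ superDiff (fun z => infDist z S) x) (v : En n) :
    ∃ y ∈ projSet S x, ⟪‖x - y‖⁻¹ • (x - y), v⟫_ℝ ≤ ⟪p, v⟫_ℝ := by
  set F : En n → ℝ := fun y => ⟪‖x - y‖⁻¹ • (x - y), v⟫_ℝ
  have hF : ContinuousOn F {x}ᶜ :=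
    (continuousOn_inv_norm_sub_smul_sub x).inner continuousOn_const
  have hPx : projSet S x ⊆ {x}ᶜ := fun y hy => ne_of_mem_of_not_mem hy.1 hx
  obtain ⟨y₀, hy₀, hmin⟩ :=
    (isCompact_projSet hSc x).exists_isMinOn (projSet_nonempty hS hSc x) (hF.mono hPx)
  refine ⟨y₀, hy₀, le_of_not_gt fun (hlt : ⟪p, v⟫_ℝ < F y₀) => ?_⟩
  -- Projections of `x + t • v` for small `t > 0` stay where `F > c`, yet the supergradient
  -- inequality bounds `F` there by `⟪p, v⟫ + (c - ⟪p, v⟫) = c`.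
  obtain ⟨c, hpc, hcF⟩ := exists_between hlt
  have hU : IsOpen ({x}ᶜ ∩ F ⁻¹' Ioi c) :=
    hF.isOpen_inter_preimage isOpen_compl_singleton isOpen_Ioi
  have hPU : projSet S x ⊆ {x}ᶜ ∩ F ⁻¹' Ioi c := fun y hy =>
    ⟨hPx hy, show c < F y by linarith [show F y₀ ≤ F y from hmin hy]⟩
  obtain ⟨t, htU, htslope, htpos⟩ :=
    (((tendsto_add_smul_nhdsGT_zero x v).eventually (eventually_projSet_subset hSc x hU hPU)).and
      ((eventually_slope_le_of_mem_superDiff hp v (sub_pos.2 hpc)).and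
        self_mem_nhdsWithin)).exists
  obtain ⟨y, hy⟩ := projSet_nonempty hS hSc (x + t • v)
  obtain ⟨hxy, hFy⟩ := htU hy
  have hlow := infDist_add_inner_le_infDist_add hy (Ne.symm hxy)
  rw [real_inner_smul_right] at hlow
  have hFy' : F y ≤ t⁻¹ * (infDist (x + t • v) S - infDist x S) := by
    rw [le_inv_mul_iff₀ htpos]
    linarith
  linarith [show c < F y from hFy]

theorem hasGradientAt_infDist_of_projSet_eq_singleton (hSc : IsClosed S) (hz : z ∉ S)
    (hy : projSet S z = {y}) :
    HasGradientAt (fun w => infDist w S) (‖z - y‖⁻¹ • (z - y)) z := by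
  have hyP : y ∈ projSet S z := hy ▸ mem_singleton y
  set p := ‖z - y‖⁻¹ • (z - y)
  have hshift : Tendsto (fun h => z + h) (𝓝 0) (𝓝 z) := by
    simpa using (continuous_const_add z).tendsto (0 : En n)
  rw [hasGradientAt_iff_hasFDerivAt, hasFDerivAt_iff_isLittleO_nhds_zero,
    Asymptotics.isLittleO_iff]
  intro c hc
  obtain ⟨δ, hδ, hcont⟩ := Metric.continuousAt_iff.mp
    ((continuousOn_inv_norm_sub_smul_sub z).continuousAt
      (isOpen_compl_singleton.mem_nhds (ne_of_mem_of_not_mem hyP.1 hz))) c hc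
  -- The upper bound holds since `p` is a supergradient; the lower bound since the projections
  -- of `z + h` are close to `y`, so their directions are `c`-close to `p`.
  have hnear : ∀ᶠ h in 𝓝 0, projSet S (z + h) ⊆ ball y δ :=
    hshift.eventually (eventually_projSet_subset hSc z isOpen_ball (by simpa [hy] using hδ))
  have hup : ∀ᶠ h in 𝓝 0, infDist (z + h) S - infDist z S - ⟪p, h⟫_ℝ ≤ c * ‖h‖ := by
    simpa using hshift.eventually (inv_norm_sub_smul_sub_mem_superDiff_infDist hz hyP c hc)
  filter_upwards [hnear, hup] with h hh hh'
  obtain ⟨w, hw⟩ := projSet_nonempty ⟨y, hyP.1⟩ hSc (z + h)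
  have hlow := infDist_add_inner_le_infDist_add hw (ne_of_mem_of_not_mem hw.1 hz).symm
  have hclose : ‖‖z - w‖⁻¹ • (z - w) - p‖ < c := by
    simpa [dist_eq_norm] using hcont (hh hw)
  have herr : -(c * ‖h‖) ≤ ⟪‖z - w‖⁻¹ • (z - w) - p, h⟫_ℝ :=
    calc -(c * ‖h‖) ≤ -(‖‖z - w‖⁻¹ • (z - w) - p‖ * ‖h‖) := by gcongr
      _ ≤ ⟪‖z - w‖⁻¹ • (z - w) - p, h⟫_ℝ := neg_le_of_abs_le (abs_real_inner_le_norm _ _)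
  rw [inner_sub_left] at herr
  rw [InnerProductSpace.toDual_apply_apply, Real.norm_eq_abs, abs_le]
  constructor <;> linarith

end DistanceFunction

section Segment

variable {n : ℕ} {S : Set (En n)} {x y : En n} {t : ℝ}

open AffineMap

theorem infDist_lineMap_of_mem_projSet (hy : y ∈ projSet S x) (ht0 : 0 ≤ t) (ht1 : t ≤ 1) :
    infDist (lineMap x y t) S = (1 - t) * infDist x S := by
  apply le_antisymm
  · calc infDist (lineMap x y t) S ≤ dist (lineMap x y t) y := infDist_le_dist_of_mem hy.1
      _ = (1 - t) * infDist x S := by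
        rw [dist_lineMap_right, Real.norm_of_nonneg (sub_nonneg.2 ht1), hy.2]
  · have h1 : infDist x S ≤ infDist (lineMap x y t) S + dist x (lineMap x y t) :=
      infDist_le_infDist_add_dist
    rw [dist_comm, dist_lineMap_left, Real.norm_of_nonneg ht0, hy.2] at h1
    linarith

theorem projSet_lineMap_eq_singleton (hy : y ∈ projSet S x) (ht0 : 0 < t) (ht1 : t ≤ 1) :
    projSet S (lineMap x y t) = {y} := by
  have hdz := infDist_lineMap_of_mem_projSet hy ht0.le ht1
  have hxz : dist x (lineMap x y t) = t * infDist x S := by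
    rw [dist_comm, dist_lineMap_left, Real.norm_of_nonneg ht0.le, hy.2]
  refine Subset.antisymm (fun w hw => ?_) (singleton_subset_iff.2 ⟨hy.1, ?_⟩)
  · -- `w` attains equality in the triangle inequality through `lineMap x y t`.
    have hxw : dist x w = infDist x S := by
      refine le_antisymm ?_ (infDist_le_dist_of_mem hw.1)
      linarith [dist_triangle x (lineMap x y t) w, hw.2]
    have hline : lineMap x y t = lineMap x w t :=
      eq_lineMap_of_dist_eq_mul_of_dist_eq_mul (by rw [hxz, hxw]) (by rw [hw.2, hdz, hxw])
    simp only [lineMap_apply_module] at hline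
    exact (smul_right_injective (En n) ht0.ne' (add_left_cancel hline)).symm
  · rw [dist_lineMap_right, Real.norm_of_nonneg (sub_nonneg.2 ht1), hy.2, hdz]

theorem hasGradientAt_infDist_lineMap (hSc : IsClosed S) (hx : x ∉ S) (hy : y ∈ projSet S x)
    (ht0 : 0 < t) (ht1 : t < 1) :
    HasGradientAt (fun w => infDist w S) (‖x - y‖⁻¹ • (x - y)) (lineMap x y t) := by
  have hd : 0 < infDist x S := (hSc.notMem_iff_infDist_pos ⟨y, hy.1⟩).1 hx
  have hz : lineMap x y t ∉ S := by
    rw [hSc.notMem_iff_infDist_pos ⟨y, hy.1⟩, infDist_lineMap_of_mem_projSet hy ht0.le ht1.le]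
    exact mul_pos (sub_pos.2 ht1) hd
  convert hasGradientAt_infDist_of_projSet_eq_singleton hSc hz
    (projSet_lineMap_eq_singleton hy ht0 ht1.le) using 1
  rw [← vsub_eq_sub (lineMap x y t), lineMap_vsub_right, vsub_eq_sub, norm_smul,
    Real.norm_of_nonneg (sub_nonneg.2 ht1.le), smul_smul]
  congr 1
  field_simp [(sub_pos.2 ht1).ne']

end Segment

section Gradients

variable {n : ℕ} {S : Set (En n)} {x : En n}

theorem reachGrad_infDist_subset (hS : S.Nonempty) (hSc : IsClosed S) (hx : x ∉ S) :
    reachGrad (fun z => infDist z S) x ⊆ (fun y => ‖x - y‖⁻¹ • (x - y)) '' projSet S x := by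
  rintro p ⟨xs, -, hdiff, htend, hgrad⟩
  have hd : 0 < infDist x S := (hSc.notMem_iff_infDist_pos hS).1 hx
  -- `xs k - d_S(xs k) • ∇d_S(xs k)` is a projection of `xs k`; pass to the limit.
  set Y := fun k => xs k - infDist (xs k) S • gradient (fun z => infDist z S) (xs k)
  have hY : ∀ᶠ k in atTop, Y k ∈ projSet S (xs k) := by
    filter_upwards [htend.eventually (hSc.isOpen_compl.mem_nhds hx)] with k hk
    obtain ⟨y, hy⟩ := projSet_nonempty hS hSc (xs k)
    have hne : ‖xs k - y‖ ≠ 0 := by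
      rw [norm_sub_eq_infDist_of_mem_projSet hy]
      exact ((hSc.notMem_iff_infDist_pos hS).1 hk).ne'
    convert hy using 1
    simp only [Y]
    rw [gradient_infDist_eq hk (hdiff k) hy, ← norm_sub_eq_infDist_of_mem_projSet hy, smul_smul,
      mul_inv_cancel₀ hne, one_smul, sub_sub_cancel]
  have hYlim : Tendsto Y atTop (𝓝 (x - infDist x S • p)) :=
    htend.sub ((((continuous_infDist_pt S).tendsto x).comp htend).smul hgrad)
  have hy₀ := mem_projSet_of_tendsto hSc htend hYlim hY
  refine ⟨_, hy₀, ?_⟩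
  dsimp only
  rw [norm_sub_eq_infDist_of_mem_projSet hy₀, sub_sub_cancel, smul_smul,
    inv_mul_cancel₀ hd.ne', one_smul]

theorem image_subset_reachGrad_infDist (hSc : IsClosed S) (hx : x ∉ S) :
    (fun y => ‖x - y‖⁻¹ • (x - y)) '' projSet S x ⊆ reachGrad (fun z => infDist z S) x := by
  rintro _ ⟨y, hy, rfl⟩
  set t : ℕ → ℝ := fun k => ((k : ℝ) + 2)⁻¹
  have ht0 : ∀ k, 0 < t k := fun k => by positivity
  have ht1 : ∀ k, t k < 1 := fun k =>
    inv_lt_one_of_one_lt₀ (by linarith [k.cast_nonneg (α := ℝ)])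
  have htlim : Tendsto t atTop (𝓝 0) :=
    tendsto_inv_atTop_zero.comp (tendsto_atTop_add_const_right _ 2 tendsto_natCast_atTop_atTop)
  have hgrad k := hasGradientAt_infDist_lineMap hSc hx hy (ht0 k) (ht1 k)
  refine ⟨fun k => AffineMap.lineMap x y (t k), fun k hk => ?_,
    fun k => (hgrad k).differentiableAt, ?_, ?_⟩
  · have := congrArg (dist · x) hk
    simp only [dist_lineMap_left, dist_self, Real.norm_of_nonneg (ht0 k).le] at this
    exact ne_of_mem_of_not_mem hy.1 hx
      (dist_eq_zero.1 ((mul_eq_zero.1 this).resolve_left (ht0 k).ne')).symm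
  · exact (AffineMap.lineMap_continuous.tendsto' 0 x (AffineMap.lineMap_apply_zero x y)).comp
      htlim
  · simp only [(hgrad _).gradient]
    exact tendsto_const_nhds

theorem superDiff_infDist_eq_convexHull (hS : S.Nonempty) (hSc : IsClosed S) (hx : x ∉ S) :
    superDiff (fun z => infDist z S) x
      = convexHull ℝ ((fun y => ‖x - y‖⁻¹ • (x - y)) '' projSet S x) := by
  set K := (fun y => ‖x - y‖⁻¹ • (x - y)) '' projSet S x
  refine Subset.antisymm (fun p hp => by_contra fun hpK => ?_)
    (convexHull_min
      (by rintro _ ⟨y, hy, rfl⟩; exact inv_norm_sub_smul_sub_mem_superDiff_infDist hx hy)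
      convex_superDiff)
  have hK : IsCompact K := (isCompact_projSet hSc x).image_of_continuousOn
    ((continuousOn_inv_norm_sub_smul_sub x).mono fun y hy => ne_of_mem_of_not_mem hy.1 hx)
  obtain ⟨f, u, hfp, hfK⟩ :=
    geometric_hahn_banach_point_closed (convex_convexHull ℝ K) hK.convexHull.isClosed hpK
  set v := (InnerProductSpace.toDual ℝ (En n)).symm f
  have hfv : ∀ q, f q = ⟪q, v⟫_ℝ := fun q => by
    rw [real_inner_comm, InnerProductSpace.toDual_symm_apply]
  obtain ⟨y, hy, hyv⟩ := exists_mem_projSet_inner_le_of_mem_superDiff hS hSc hx hp v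
  have := hfK _ (subset_convexHull ℝ K ⟨y, hy, rfl⟩)
  rw [hfv] at this hfp
  linarith

theorem image_convexHull_projSet :
    (fun y => (infDist x S)⁻¹ • (x - y)) '' convexHull ℝ (projSet S x)
      = convexHull ℝ ((fun y => ‖x - y‖⁻¹ • (x - y)) '' projSet S x) := by
  let T : En n →ᵃ[ℝ] En n :=
    (infDist x S)⁻¹ • (AffineMap.const ℝ (En n) x - AffineMap.id ℝ (En n))
  have hT : ⇑T = fun y => (infDist x S)⁻¹ • (x - y) := rfl
  rw [← hT, T.image_convexHull, hT]
  exact congrArg _ (image_congr fun y hy => by rw [norm_sub_eq_infDist_of_mem_projSet hy])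

end Gradients

theorem reachable_gradients_and_superdifferential_of_distance_general {n : ℕ} (S : Set (En n))
    (hS : S.Nonempty) (hSc : IsClosed S) (x : En n) (hx : x ∉ S) :
    reachGrad (fun z => Metric.infDist z S) x
        = (fun y => ‖x - y‖⁻¹ • (x - y)) '' projSet S x ∧
      superDiff (fun z => Metric.infDist z S) x
        = convexHull ℝ (reachGrad (fun z => Metric.infDist z S) x) ∧
      superDiff (fun z => Metric.infDist z S) x
        = (fun y => (Metric.infDist x S)⁻¹ • (x - y)) '' convexHull ℝ (projSet S x) := by
  have hreach :=
    (reachGrad_infDist_subset hS hSc hx).antisymm (image_subset_reachGrad_infDist hSc hx)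
  have hsuper := superDiff_infDist_eq_convexHull hS hSc hx
  exact ⟨hreach, hreach ▸ hsuper, hsuper.trans image_convexHull_projSet.symm⟩

/-- Characterization of the reachable gradients and the superdifferential
of the distance function at a singular point outside `S`. -/
theorem reachable_gradients_and_superdifferential_of_distance {n : ℕ} (S : Set (En n))
    (hS : S.Nonempty) (hSc : IsClosed S) (x : En n) (hx : x ∉ S)
    (hnd : ¬ DifferentiableAt ℝ (fun z => Metric.infDist z S) x) :
    reachGrad (fun z => Metric.infDist z S) x
        = (fun y => ‖x - y‖⁻¹ • (x - y)) '' projSet S x ∧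
      superDiff (fun z => Metric.infDist z S) x
        = convexHull ℝ (reachGrad (fun z => Metric.infDist z S) x) ∧
      superDiff (fun z => Metric.infDist z S) x
        = (fun y => (Metric.infDist x S)⁻¹ • (x - y)) '' convexHull ℝ (projSet S x) :=
  reachable_gradients_and_superdifferential_of_distance_general S hS hSc x hx
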